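/- Let f : ℝ^{N×K} → ℝ^K be the coordinatewise column-max function, f(H)_j = max_i H_{i,j}, and let γ : ℝ^K → ℝ be any function. Then for any H there exists a subset C of row indices with |C| ≤ K such that for every H' obtained from H by deleting rows not in C, max_i over remaining rows of H'_{i,j} equals max_i H_{i,j} for all j; i.e., γ(f(H')) = γ(f(H)). -/
import Mathlib


open Finset

/-- PointNet critical-point property: for column-max pooling `f(H)_j = max_i H_{i,j}`
there is a set `C` of at most `K` row indices such that keeping any superset `D ⊇ C` of
the rows leaves every column maximum, and hence `γ ∘ f`, unchanged. -/
theorem pointnet_critical_points (N K : ℕ) (hN : 0 < N)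
    (H : Matrix (Fin N) (Fin K) ℝ) (γ : (Fin K → ℝ) → ℝ) :
    ∃ C : Finset (Fin N), C.card ≤ K ∧
      ∀ D : Finset (Fin N), C ⊆ D →
        ∀ hD : D.Nonempty,
          (∀ j : Fin K, (D.sup' hD fun i => H i j) =
            (Finset.univ.sup' (Finset.univ_nonempty_iff.mpr (Fin.pos_iff_nonempty.mp hN))
              fun i => H i j)) ∧
          γ (fun j => D.sup' hD fun i => H i j) =
            γ (fun j =>
              Finset.univ.sup' (Finset.univ_nonempty_iff.mpr (Fin.pos_iff_nonempty.mp hN))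
                fun i => H i j) := by
  have hu : (Finset.univ : Finset (Fin N)).Nonempty :=
    Finset.univ_nonempty_iff.mpr (Fin.pos_iff_nonempty.mp hN)
  -- argmax for each column
  have harg : ∀ j : Fin K, ∃ i : Fin N,
      (Finset.univ.sup' hu fun i => H i j) = H i j := by
    intro j
    obtain ⟨i, _, hi⟩ := Finset.exists_mem_eq_sup' hu (fun i => H i j)
    exact ⟨i, hi⟩
  choose a ha using harg
  refine ⟨Finset.image a Finset.univ, ?_, ?_⟩
  · calc (Finset.image a Finset.univ).card ≤ (Finset.univ : Finset (Fin K)).card :=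
        Finset.card_image_le
      _ = K := by simp
  · intro D hCD hD
    have key : ∀ j : Fin K, (D.sup' hD fun i => H i j) =
        (Finset.univ.sup' hu fun i => H i j) := by
      intro j
      apply le_antisymm
      · exact Finset.sup'_le _ _ fun i _ => Finset.le_sup' (f := fun i => H i j) (Finset.mem_univ i)
      · rw [ha j]
        exact Finset.le_sup' (f := fun i => H i j) (hCD (Finset.mem_image_of_mem a (Finset.mem_univ j)))
    exact ⟨key, by simp only [key]⟩
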